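/- Any complete set of n-qubit product rays contains exactly one all-north ray: for every n ≥ 1, every orthonormal basis of (ℂ²)^{⊗n} consisting of 2ⁿ product vectors contains exactly one all-north element. -/

import Mathlib

open scoped InnerProductSpace
open MeasureTheory

noncomputable section

abbrev Qubit : Type := EuclideanSpace ℂ (Fin 2)
abbrev NQubit (n : ℕ) : Type := EuclideanSpace ℂ (Fin n → Fin 2)

/-- The product vector `ψ₁ ⊗ ⋯ ⊗ ψₙ` in `(ℂ²)^{⊗n}`, modelled concretely as
`EuclideanSpace ℂ (Fin n → Fin 2)`; its inner products satisfy
`⟨tens ψ, tens χ⟩ = ∏ j, ⟨ψ j, χ j⟩`. -/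
noncomputable def tens {n : ℕ} (ψ : Fin n → Qubit) : NQubit n :=
  WithLp.toLp 2 (fun f => ∏ j, ψ j (f j))

/-- A vector of `(ℂ²)^{⊗n}` is a product vector if it is of the form `ψ₁ ⊗ ⋯ ⊗ ψₙ`. -/
def IsProduct {n : ℕ} (v : NQubit n) : Prop := ∃ ψ : Fin n → Qubit, v = tens ψ

/-- A finite set of vectors forming an orthonormal basis of `H`. -/
def IsONBasis {H : Type*} [NormedAddCommGroup H] [InnerProductSpace ℂ H]
    (B : Finset H) : Prop :=
  Orthonormal ℂ (fun v : B => (v : H)) ∧ Submodule.span ℂ (B : Set H) = ⊤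

/-- A KS-colouring of a set `S` of unit vectors: a `{0,1}`-valued map (modelled as a
predicate, `c v` meaning value `1`) such that every orthonormal basis contained in `S`
has exactly one element of value `1`, and no two mutually orthogonal elements of `S`
both have value `1`. -/
def IsKSColouring {H : Type*} [NormedAddCommGroup H] [InnerProductSpace ℂ H]
    (S : Set H) (c : H → Prop) : Prop :=
  (∀ B : Finset H, ↑B ⊆ S → IsONBasis B → ∃! v, v ∈ B ∧ c v) ∧
  (∀ ψ ∈ S, ∀ χ ∈ S, ⟪ψ, χ⟫_ℂ = 0 → ¬(c ψ ∧ c χ))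

/-- First coordinate of the Bloch vector of a qubit vector. -/
def blochX (ψ : Qubit) : ℝ := 2 * ((starRingEnd ℂ) (ψ 0) * ψ 1).re
/-- Second coordinate of the Bloch vector of a qubit vector. -/
def blochY (ψ : Qubit) : ℝ := 2 * ((starRingEnd ℂ) (ψ 0) * ψ 1).im
/-- Third coordinate of the Bloch vector of a qubit vector. -/
def blochZ (ψ : Qubit) : ℝ := Complex.normSq (ψ 0) - Complex.normSq (ψ 1)

/-- A qubit unit vector is north if its Bloch vector `(x,y,z)` satisfies `z > 0`, or
`z = 0 ∧ y < 0`, or `z = 0 ∧ y = 0 ∧ x > 0`. -/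
def IsNorth (ψ : Qubit) : Prop :=
  0 < blochZ ψ ∨ (blochZ ψ = 0 ∧ blochY ψ < 0) ∨
    (blochZ ψ = 0 ∧ blochY ψ = 0 ∧ 0 < blochX ψ)

/-- An `n`-qubit product vector is all-north if it factors as a product of north
qubit vectors. -/
def AllNorth {n : ℕ} (v : NQubit n) : Prop :=
  ∃ ψ : Fin n → Qubit, v = tens ψ ∧ ∀ j, IsNorth (ψ j)

/-!
Orthogonal qubit vectors have antipodal Bloch vectors, and the north region contains exactly one
point of each antipodal pair on the sphere. Two orthogonal product vectors are orthogonal in some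
factor, so the basis vectors have pairwise distinct north/south patterns of their factors. There
are `2ⁿ` basis vectors and `2ⁿ` patterns, so every pattern occurs, the all-north one exactly once.
-/

open Complex ComplexConjugate

lemma inner_tens {n : ℕ} (ψ χ : Fin n → Qubit) :
    ⟪tens ψ, tens χ⟫_ℂ = ∏ j, ⟪ψ j, χ j⟫_ℂ := by
  simp only [tens, PiLp.inner_apply, RCLike.inner_apply, map_prod, ← Finset.prod_mul_distrib]
  exact (Fintype.prod_sum (fun j i => χ j i * (starRingEnd ℂ) (ψ j i))).symm

lemma tens_eq_zero {n : ℕ} {ψ : Fin n → Qubit} {j : Fin n} (hj : ψ j = 0) :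
    tens ψ = 0 := by
  ext f
  exact Finset.prod_eq_zero (Finset.mem_univ j) (by simp [hj])

lemma Qubit.norm_sq_eq (ψ : Qubit) : ‖ψ‖ ^ 2 = normSq (ψ 0) + normSq (ψ 1) := by
  simp [EuclideanSpace.norm_sq_eq, Fin.sum_univ_two, Complex.sq_norm]

lemma blochX_sq_add_blochY_sq_add_blochZ_sq (ψ : Qubit) :
    blochX ψ ^ 2 + blochY ψ ^ 2 + blochZ ψ ^ 2 = (‖ψ‖ ^ 2) ^ 2 := by
  have h : ((starRingEnd ℂ) (ψ 0) * ψ 1).re ^ 2 + ((starRingEnd ℂ) (ψ 0) * ψ 1).im ^ 2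
      = normSq (ψ 0) * normSq (ψ 1) := by
    rw [← normSq_conj (ψ 0), ← normSq_mul, normSq_apply]; ring
  rw [Qubit.norm_sq_eq, blochX, blochY, blochZ]
  linear_combination 4 * h

lemma bloch_mul_norm_sq_eq_neg_of_inner_eq_zero {ψ χ : Qubit} (h : ⟪ψ, χ⟫_ℂ = 0) :
    blochX χ * ‖ψ‖ ^ 2 = -(blochX ψ * ‖χ‖ ^ 2) ∧ blochY χ * ‖ψ‖ ^ 2 = -(blochY ψ * ‖χ‖ ^ 2) ∧
      blochZ χ * ‖ψ‖ ^ 2 = -(blochZ ψ * ‖χ‖ ^ 2) := by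
  have h₁ : conj (ψ 0) * χ 0 + conj (ψ 1) * χ 1 = 0 := by
    simpa [PiLp.inner_apply, Fin.sum_univ_two, mul_comm] using h
  have h₂ : ψ 0 * conj (χ 0) + ψ 1 * conj (χ 1) = 0 := by
    simpa using congrArg conj h₁
  have norm_sq (φ : Qubit) : (‖φ‖ : ℂ) ^ 2 = conj (φ 0) * φ 0 + conj (φ 1) * φ 1 := by
    rw [← ofReal_pow, Qubit.norm_sq_eq]; push_cast
    rw [normSq_eq_conj_mul_self, normSq_eq_conj_mul_self]
  have hXY : conj (χ 0) * χ 1 * ((‖ψ‖ ^ 2 : ℝ) : ℂ) = -(conj (ψ 0) * ψ 1 * ((‖χ‖ ^ 2 : ℝ) : ℂ)) := by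
    rw [ofReal_pow, ofReal_pow, norm_sq, norm_sq]
    linear_combination (conj (ψ 0) * χ 1) * h₂ + (ψ 1 * conj (χ 0)) * h₁
  have hZ : ((blochZ χ * ‖ψ‖ ^ 2 : ℝ) : ℂ) = ((-(blochZ ψ * ‖χ‖ ^ 2) : ℝ) : ℂ) := by
    push_cast [blochZ]
    rw [norm_sq, norm_sq, normSq_eq_conj_mul_self, normSq_eq_conj_mul_self, normSq_eq_conj_mul_self,
      normSq_eq_conj_mul_self]
    linear_combination (2 * ψ 0 * conj (χ 0)) * h₁ - (2 * conj (ψ 1) * χ 1) * h₂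
  refine ⟨?_, ?_, ofReal_injective hZ⟩
  · have := congrArg re hXY
    simp only [re_mul_ofReal, neg_re] at this
    simp only [blochX]
    linarith
  · have := congrArg im hXY
    simp only [im_mul_ofReal, neg_im] at this
    simp only [blochY]
    linarith

def IsNorthPoint (x y z : ℝ) : Prop :=
  0 < z ∨ (z = 0 ∧ y < 0) ∨ (z = 0 ∧ y = 0 ∧ 0 < x)

lemma isNorthPoint_iff_not_of_mul_eq_neg_mul {x y z x' y' z' s t : ℝ} (hs : 0 < s) (ht : 0 < t)
    (hx : x' * s = -(x * t)) (hy : y' * s = -(y * t)) (hz : z' * s = -(z * t))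
    (hne : x ^ 2 + y ^ 2 + z ^ 2 ≠ 0) :
    IsNorthPoint x y z ↔ ¬ IsNorthPoint x' y' z' := by
  have sign {u u' : ℝ} (h : u' * s = -(u * t)) :
      (0 < u' ↔ u < 0) ∧ (u' < 0 ↔ 0 < u) ∧ (u' = 0 ↔ u = 0) := by
    refine ⟨⟨fun h' => ?_, fun h' => ?_⟩, ⟨fun h' => ?_, fun h' => ?_⟩, ⟨fun h' => ?_, fun h' => ?_⟩⟩
      <;> nlinarith [mul_pos hs ht]
  have := sign hx
  have := sign hy
  have := sign hz
  unfold IsNorthPoint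
  grind

lemma isNorth_iff_not_isNorth_of_inner_eq_zero {ψ χ : Qubit} (hψ : ψ ≠ 0) (hχ : χ ≠ 0)
    (h : ⟪ψ, χ⟫_ℂ = 0) : IsNorth ψ ↔ ¬ IsNorth χ := by
  obtain ⟨hx, hy, hz⟩ := bloch_mul_norm_sq_eq_neg_of_inner_eq_zero h
  refine isNorthPoint_iff_not_of_mul_eq_neg_mul (pow_pos (norm_pos_iff.2 hψ) 2)
    (pow_pos (norm_pos_iff.2 hχ) 2) hx hy hz ?_
  rw [blochX_sq_add_blochY_sq_add_blochZ_sq]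
  exact pow_ne_zero 2 (pow_ne_zero 2 (norm_ne_zero_iff.2 hψ))

lemma exists_isNorth_iff_not_isNorth_of_inner_tens_eq_zero {n : ℕ} {ψ χ : Fin n → Qubit}
    (hψ : tens ψ ≠ 0) (hχ : tens χ ≠ 0) (h : ⟪tens ψ, tens χ⟫_ℂ = 0) :
    ∃ j, IsNorth (ψ j) ↔ ¬ IsNorth (χ j) := by
  rw [inner_tens] at h
  obtain ⟨j, -, hj⟩ := Finset.prod_eq_zero_iff.1 h
  exact ⟨j, isNorth_iff_not_isNorth_of_inner_eq_zero (fun h0 => hψ (tens_eq_zero h0))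
    (fun h0 => hχ (tens_eq_zero h0)) hj⟩

lemma not_allNorth_of_inner_eq_zero {n : ℕ} {v w : NQubit n} (hv : v ≠ 0) (hw : w ≠ 0)
    (h : ⟪v, w⟫_ℂ = 0) (hvN : AllNorth v) : ¬ AllNorth w := by
  rintro ⟨χ, rfl, hχ⟩
  obtain ⟨ψ, rfl, hψ⟩ := hvN
  obtain ⟨j, hj⟩ := exists_isNorth_iff_not_isNorth_of_inner_tens_eq_zero hv hw h
  exact hj.1 (hψ j) (hχ j)

theorem n_qubit_product_basis_exactly_one_all_north_general
    (n : ℕ) (B : Finset (NQubit n)) (hcard : B.card = 2 ^ n)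
    (hB : IsONBasis B) (hprod : ∀ v ∈ B, IsProduct v) :
    ∃! v, v ∈ B ∧ AllNorth v := by
  classical
  have hne (v : B) : (v : NQubit n) ≠ 0 := hB.1.ne_zero v
  have horth {v w : B} (hvw : v ≠ w) : ⟪(v : NQubit n), w⟫_ℂ = 0 := hB.1.2 hvw
  choose ψ hψ using fun v : B => hprod v v.2
  let northPattern : B → (Fin n → Bool) := fun v j => decide (IsNorth (ψ v j))
  have hinj : Function.Injective northPattern := by
    intro v w hvw
    by_contra hvw'
    have hψvw := horth hvw'
    rw [hψ v, hψ w] at hψvw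
    obtain ⟨j, hj⟩ := exists_isNorth_iff_not_isNorth_of_inner_tens_eq_zero
      (hψ v ▸ hne v) (hψ w ▸ hne w) hψvw
    simpa [northPattern, hj] using congrFun hvw j
  obtain ⟨v, hv⟩ := ((Fintype.bijective_iff_injective_and_card northPattern).2
    ⟨hinj, by simp [hcard]⟩).2 fun _ => true
  have hvN : AllNorth (v : NQubit n) :=
    ⟨ψ v, hψ v, fun j => by simpa [northPattern] using congrFun hv j⟩
  refine ⟨v, ⟨v.2, hvN⟩, fun w ⟨hw, hwN⟩ => ?_⟩
  by_contra hwv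
  exact not_allNorth_of_inner_eq_zero (hne v) (hne ⟨w, hw⟩)
    (horth (w := ⟨w, hw⟩) (Subtype.coe_ne_coe.1 (Ne.symm hwv))) hvN hwN

/-- for every `n ≥ 1`, every orthonormal basis of `(ℂ²)^{⊗n}` consisting
of `2ⁿ` product vectors contains exactly one all-north element. -/
theorem n_qubit_product_basis_exactly_one_all_north
    (n : ℕ) (hn : 1 ≤ n) (B : Finset (NQubit n)) (hcard : B.card = 2 ^ n)
    (hB : IsONBasis B) (hprod : ∀ v ∈ B, IsProduct v) :
    ∃! v, v ∈ B ∧ AllNorth v :=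
  n_qubit_product_basis_exactly_one_all_north_general n B hcard hB hprod

end
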